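/- Two-sided operator bound for the normalization defect of the zeroth Kraus operator: let Q be a positive semidefinite Hermitian d×d complex matrix and Δt ≥ 0; set S = I + (Δt²/4)Q² and let S^{−1/2} be the inverse of its positive definite square root. Then, in the Loewner order, −(Δt²/4)·Q² ≤ (I − (Δt/2)Q)·(I − S^{−1/2}) ≤ (Δt²/4)·Q². -/

import Mathlib

/-!
All matrices involved are functions of the Hermitian matrix `Q`: with `t = Δt/2`, the
defect is `g(Q)` for `g(x) = (1 - t x)(1 - (1 + (t x)²)^{-1/2})`, and `(Δt²/4) Q² = h(Q)` for
`h(x) = (t x)²`. By monotonicity of the functional calculus it suffices that `|g| ≤ h` on ℝ.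
Writing `y = t x` and `s = √(1 + y²) ≥ max 1 |y|`, we have `|1 - y| ≤ 1 + |y| ≤ s² + s`, and
`(s² + s)(1 - s⁻¹) = s² - 1 = y²`.
-/

open Matrix
open scoped ComplexOrder

/-- The positive semidefinite square root of a matrix (defined to be `0` if the matrix is not
positive semidefinite). -/
noncomputable def matSqrt {d : ℕ} (A : Matrix (Fin d) (Fin d) ℂ) : Matrix (Fin d) (Fin d) ℂ :=
  open scoped Classical in
  if h : A.PosSemidef then (h.1.eigenvectorUnitary : Matrix (Fin d) (Fin d) ℂ) *
    diagonal ((↑) ∘ (√·) ∘ h.1.eigenvalues) * (star (h.1.eigenvectorUnitary : Matrix (Fin d) (Fin d) ℂ))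
  else 0

open scoped MatrixOrder

theorem abs_one_sub_mul_one_sub_inv_sqrt_one_add_sq_le (y : ℝ) :
    |(1 - y) * (1 - (√(1 + y ^ 2))⁻¹)| ≤ y ^ 2 := by
  set s := √(1 + y ^ 2)
  have hs_sq : s ^ 2 = 1 + y ^ 2 := Real.sq_sqrt (by positivity)
  have hs_one : 1 ≤ s := Real.one_le_sqrt.mpr (by nlinarith)
  have habs : |y| ≤ s := Real.abs_le_sqrt (by nlinarith)
  have hfactor : 0 ≤ 1 - s⁻¹ := sub_nonneg.mpr (inv_le_one_of_one_le₀ hs_one)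
  calc |(1 - y) * (1 - s⁻¹)| = |1 - y| * (1 - s⁻¹) := by rw [abs_mul, abs_of_nonneg hfactor]
    _ ≤ (s ^ 2 + s) * (1 - s⁻¹) := by
        gcongr
        linarith [abs_sub (1 : ℝ) y, abs_one (α := ℝ), sq_nonneg y]
    _ = s ^ 2 - 1 := by field_simp; ring
    _ = y ^ 2 := by linarith

theorem matSqrt_eq_cfc_sqrt {d : ℕ} {A : Matrix (Fin d) (Fin d) ℂ} (hA : A.PosSemidef) :
    matSqrt A = cfc Real.sqrt A := by
  rw [hA.1.cfc_eq, matSqrt, dif_pos hA]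
  rfl

section Hermitian

variable {d : ℕ} {Q : Matrix (Fin d) (Fin d) ℂ}

theorem smul_sq_eq_cfc (hQ : Q.IsHermitian) (t : ℝ) :
    ((t ^ 2 : ℝ) : ℂ) • Q ^ 2 = cfc (fun x => (t * x) ^ 2) Q := by
  simp_rw [mul_pow]
  rw [cfc_const_mul .., cfc_pow .., cfc_id' .., Complex.coe_smul]

theorem matSqrt_one_add_smul_sq (hQ : Q.IsHermitian) (t : ℝ) :
    matSqrt (1 + ((t ^ 2 : ℝ) : ℂ) • Q ^ 2) = cfc (fun x => √(1 + (t * x) ^ 2)) Q := by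
  have hS : 1 + ((t ^ 2 : ℝ) : ℂ) • Q ^ 2 = cfc (fun x => 1 + (t * x) ^ 2) Q := by
    rw [cfc_add .., cfc_const_one .., smul_sq_eq_cfc hQ]
  rw [hS, matSqrt_eq_cfc_sqrt (cfc_nonneg fun x _ => by positivity).posSemidef, ← cfc_comp' ..]

theorem inv_matSqrt_one_add_smul_sq (hQ : Q.IsHermitian) (t : ℝ) :
    (matSqrt (1 + ((t ^ 2 : ℝ) : ℂ) • Q ^ 2))⁻¹ = cfc (fun x => (√(1 + (t * x) ^ 2))⁻¹) Q := by
  rw [matSqrt_one_add_smul_sq hQ t, nonsing_inv_eq_ringInverse, cfc_inv _ _ fun x _ => by positivity]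

theorem one_sub_smul_mul_one_sub_inv_matSqrt (hQ : Q.IsHermitian) (t : ℝ) :
    (1 - (t : ℂ) • Q) * (1 - (matSqrt (1 + ((t ^ 2 : ℝ) : ℂ) • Q ^ 2))⁻¹) =
      cfc (fun x => (1 - t * x) * (1 - (√(1 + (t * x) ^ 2))⁻¹)) Q := by
  have hcont (f : ℝ → ℝ) : ContinuousOn f (spectrum ℝ Q) := Q.finite_real_spectrum.continuousOn f
  rw [inv_matSqrt_one_add_smul_sq hQ t,
    cfc_mul (fun x => 1 - t * x) (fun x => 1 - (√(1 + (t * x) ^ 2))⁻¹) Q (hg := hcont _),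
    cfc_sub (fun _ => 1) (fun x => (√(1 + (t * x) ^ 2))⁻¹) Q (hg := hcont _),
    cfc_sub (fun _ => 1) (fun x => t * x) Q, cfc_const_one .., cfc_const_mul .., cfc_id' ..,
    Complex.coe_smul]

end Hermitian

theorem stmt14_general {d : ℕ} (Q : Matrix (Fin d) (Fin d) ℂ) (hQ : Q.PosSemidef)
    (Δt : ℝ)
    (B : Matrix (Fin d) (Fin d) ℂ)
    (hB : B = (1 - ((Δt / 2 : ℝ) : ℂ) • Q) *
        (1 - (matSqrt (1 + ((Δt ^ 2 / 4 : ℝ) : ℂ) • Q ^ 2))⁻¹)) :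
    (((Δt ^ 2 / 4 : ℝ) : ℂ) • Q ^ 2 - B).PosSemidef
    ∧ (B - (-(((Δt ^ 2 / 4 : ℝ) : ℂ) • Q ^ 2))).PosSemidef := by
  rw [show Δt ^ 2 / 4 = (Δt / 2) ^ 2 by ring] at hB ⊢
  set t := Δt / 2
  rw [one_sub_smul_mul_one_sub_inv_matSqrt hQ.1] at hB
  have hbound (x : ℝ) := abs_le.mp (abs_one_sub_mul_one_sub_inv_sqrt_one_add_sq_le (t * x))
  rw [smul_sq_eq_cfc hQ.1, hB, ← cfc_neg ..]
  have hcont (f : ℝ → ℝ) : ContinuousOn f (spectrum ℝ Q) := Q.finite_real_spectrum.continuousOn f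
  exact ⟨cfc_mono (fun x _ => (hbound x).2) (hcont _) (hcont _),
    cfc_mono (fun x _ => (hbound x).1) (hcont _) (hcont _)⟩

/-- Two-sided operator bound for the normalization defect of the zeroth Kraus operator: for `Q`
positive semidefinite and `S = I + (Δt²/4)Q²`, in the Loewner order
`−(Δt²/4) Q² ≤ (I − (Δt/2)Q)(I − S^{−1/2}) ≤ (Δt²/4) Q²`. -/
theorem stmt14 {d : ℕ} (Q : Matrix (Fin d) (Fin d) ℂ) (hQ : Q.PosSemidef)
    (Δt : ℝ) (hΔt : 0 ≤ Δt)
    (B : Matrix (Fin d) (Fin d) ℂ)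
    (hB : B = (1 - ((Δt / 2 : ℝ) : ℂ) • Q) *
        (1 - (matSqrt (1 + ((Δt ^ 2 / 4 : ℝ) : ℂ) • Q ^ 2))⁻¹)) :
    (((Δt ^ 2 / 4 : ℝ) : ℂ) • Q ^ 2 - B).PosSemidef
    ∧ (B - (-(((Δt ^ 2 / 4 : ℝ) : ℂ) • Q ^ 2))).PosSemidef :=
  stmt14_general Q hQ Δt B hB
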